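/- arXiv:nlin/0303014 — 3 statements merged into one kernel-verified Lean document; each statement's English description precedes it below -/
import Mathlib

section
/- Let M be a smooth manifold, Z a distribution on M spanned by vector fields Z_1,...,Z_k, and π a Poisson bivector on M. If for each i there exist vector fields W_j^{(i)} such that the Lie derivative L_{Z_i}π equals the sum over j of W_j^{(i)} ∧ Z_j, then the set of smooth functions F with Z_i(F)=0 for all i is closed under the Poisson bracket {F,G}_π = ⟨dF, π dG⟩. -/
noncomputable section
open scoped BigOperators

/-- Partial derivative of `F` at `x` in the `a`-th coordinate direction. -/
def pd {m : ℕ} (F : (Fin m → ℝ) → ℝ) (x : Fin m → ℝ) (a : Fin m) : ℝ :=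
  fderiv ℝ F x (Pi.single a 1)

/-- Poisson-type bracket `{F,G}_π = ⟨dF, π dG⟩` of a bivector `π` in coordinates. -/
def pb {m : ℕ} (π : (Fin m → ℝ) → Fin m → Fin m → ℝ)
    (F G : (Fin m → ℝ) → ℝ) (x : Fin m → ℝ) : ℝ :=
  ∑ a, ∑ b, pd F x a * π x a b * pd G x b

/-- The vector field `π dF` (sharp map of a bivector applied to `dF`). -/
def piSharp {m : ℕ} (π : (Fin m → ℝ) → Fin m → Fin m → ℝ)
    (F : (Fin m → ℝ) → ℝ) (x : Fin m → ℝ) (a : Fin m) : ℝ :=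
  ∑ b, π x a b * pd F x b

/-- Skew-symmetry of a bivector. -/
def skewBi {m : ℕ} (π : (Fin m → ℝ) → Fin m → Fin m → ℝ) : Prop :=
  ∀ x a b, π x a b = - π x b a

/-- The Jacobi identity for a bivector, in tensor form. -/
def jacobiBi {m : ℕ} (π : (Fin m → ℝ) → Fin m → Fin m → ℝ) : Prop :=
  ∀ x j r s, ∑ l, (π x l j * pd (fun y => π y r s) x l
    + π x l r * pd (fun y => π y s j) x l
    + π x l s * pd (fun y => π y j r) x l) = 0

/-- The wedge product `V ∧ Z` of two vector fields, as a bivector. -/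
def wedgeVF {m : ℕ} (V Z : (Fin m → ℝ) → Fin m → ℝ) (x : Fin m → ℝ) (a b : Fin m) : ℝ :=
  V x a * Z x b - V x b * Z x a

/-- Lie bracket (commutator) of two vector fields, in coordinates. -/
def lieVF {m : ℕ} (X Y : (Fin m → ℝ) → Fin m → ℝ) (x : Fin m → ℝ) (a : Fin m) : ℝ :=
  fderiv ℝ (fun y => Y y a) x (X x) - fderiv ℝ (fun y => X y a) x (Y x)

/-- Lie derivative of a bivector `π` along a vector field `Z`, in coordinates. -/
def lieDerivBi {m : ℕ} (Z : (Fin m → ℝ) → Fin m → ℝ)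
    (π : (Fin m → ℝ) → Fin m → Fin m → ℝ) (x : Fin m → ℝ) (a b : Fin m) : ℝ :=
  fderiv ℝ (fun y => π y a b) x (Z x)
    - ∑ l, π x l b * fderiv ℝ (fun y => Z y a) x (Pi.single l 1)
    - ∑ l, π x a l * fderiv ℝ (fun y => Z y b) x (Pi.single l 1)

/-! ### Auxiliary lemmas -/

section Aux

variable {m n : ℕ}

lemma clm_apply_eq_sum (L : (Fin m → ℝ) →L[ℝ] ℝ) (w : Fin m → ℝ) :
    L w = ∑ a, w a * L (Pi.single a 1) := by
  have hw : w = ∑ a, w a • (Pi.single a 1 : Fin m → ℝ) := by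
    ext b
    simp [Pi.single_apply, Finset.sum_apply]
  conv_lhs => rw [hw]
  rw [map_sum]
  simp [smul_eq_mul]

lemma fderiv_eq_sum_pd (F : (Fin m → ℝ) → ℝ) (x w : Fin m → ℝ) :
    fderiv ℝ F x w = ∑ a, w a * pd F x a :=
  clm_apply_eq_sum (fderiv ℝ F x) w

lemma contDiff_pd {F : (Fin m → ℝ) → ℝ} (hF : ContDiff ℝ (⊤ : ℕ∞) F) (a : Fin m) :
    ContDiff ℝ (⊤ : ℕ∞) (fun x => pd F x a) := by
  have h1 : ContDiff ℝ (⊤ : ℕ∞) (fderiv ℝ F) := hF.fderiv_right (by simp)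
  exact (ContinuousLinearMap.apply ℝ ℝ (Pi.single a 1 : Fin m → ℝ)).contDiff.comp h1

lemma fderiv_pd_apply {F : (Fin m → ℝ) → ℝ} (hF : ContDiff ℝ (⊤ : ℕ∞) F) (x v : Fin m → ℝ) (a : Fin m) :
    fderiv ℝ (fun y => pd F y a) x v = fderiv ℝ (fderiv ℝ F) x v (Pi.single a 1) := by
  have h1 : ContDiff ℝ (⊤ : ℕ∞) (fderiv ℝ F) := hF.fderiv_right (by simp)
  have hd : DifferentiableAt ℝ (fderiv ℝ F) x := h1.differentiable (by simp) x
  have h2 := ((ContinuousLinearMap.apply ℝ ℝ (Pi.single a 1 : Fin m → ℝ)).hasFDerivAt.comp x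
    hd.hasFDerivAt).fderiv
  have h3 : (fun y => pd F y a) =
      (ContinuousLinearMap.apply ℝ ℝ (Pi.single a 1 : Fin m → ℝ)) ∘ (fderiv ℝ F) := rfl
  rw [h3, h2]
  simp

lemma snd_symm {F : (Fin m → ℝ) → ℝ} (hF : ContDiff ℝ (⊤ : ℕ∞) F) (x v w : Fin m → ℝ) :
    fderiv ℝ (fderiv ℝ F) x v w = fderiv ℝ (fderiv ℝ F) x w v :=
  second_derivative_symmetric (fun y => (hF.differentiable (by simp) y).hasFDerivAt)
    (((hF.fderiv_right (m := 1) (by exact WithTop.coe_le_coe.mpr (le_top : (1 + 1 : ℕ∞) ≤ ⊤))).differentiable one_ne_zero x).hasFDerivAt) v w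

lemma deriv_invariance {F : (Fin m → ℝ) → ℝ} {Zf : (Fin m → ℝ) → (Fin m → ℝ)}
    (hF : ContDiff ℝ (⊤ : ℕ∞) F) (hZf : ContDiff ℝ (⊤ : ℕ∞) Zf)
    (h0 : ∀ y, fderiv ℝ F y (Zf y) = 0) (x w : Fin m → ℝ) :
    fderiv ℝ (fderiv ℝ F) x w (Zf x) = - fderiv ℝ F x (fderiv ℝ Zf x w) := by
  have hc : DifferentiableAt ℝ (fderiv ℝ F) x := ((hF.fderiv_right (m := 1) (by exact WithTop.coe_le_coe.mpr (le_top : (1 + 1 : ℕ∞) ≤ ⊤))).differentiable one_ne_zero x)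
  have hu : DifferentiableAt ℝ Zf x := hZf.differentiable (by simp) x
  have h1 : fderiv ℝ (fun y => fderiv ℝ F y (Zf y)) x = 0 := by
    have h : (fun y => fderiv ℝ F y (Zf y)) = fun _ => (0:ℝ) := funext h0
    rw [h]; exact fderiv_const_apply 0
  have h2 := fderiv_clm_apply hc hu
  rw [h1] at h2
  have h3 := congrArg (fun L => L w) h2.symm
  simp only [ContinuousLinearMap.add_apply, ContinuousLinearMap.comp_apply,
    ContinuousLinearMap.flip_apply, ContinuousLinearMap.zero_apply] at h3
  linarith

lemma fderiv_proj {Zf : (Fin m → ℝ) → (Fin m → ℝ)} (hZf : ContDiff ℝ (⊤ : ℕ∞) Zf)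
    (x w : Fin m → ℝ) (l : Fin m) :
    fderiv ℝ Zf x w l = fderiv ℝ (fun y => Zf y l) x w := by
  have hd : DifferentiableAt ℝ Zf x := hZf.differentiable (by simp) x
  have h2 := ((ContinuousLinearMap.proj (R := ℝ) (φ := fun _ : Fin m => ℝ) l).hasFDerivAt.comp x
    hd.hasFDerivAt).fderiv
  have h3 : (fun y => Zf y l) =
      (ContinuousLinearMap.proj (R := ℝ) (φ := fun _ : Fin m => ℝ) l) ∘ Zf := rfl
  rw [h3, h2]
  simp

lemma sum3_prod (S : Fin n → Fin n → Fin n → ℝ) :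
    ∑ a, ∑ b, ∑ l, S a b l = ∑ p : Fin n × Fin n × Fin n, S p.1 p.2.1 p.2.2 := by
  rw [Fintype.sum_prod_type]
  exact Finset.sum_congr rfl fun a _ => by rw [Fintype.sum_prod_type]

lemma sum3_swap13 (T : Fin n → Fin n → Fin n → ℝ) :
    ∑ a, ∑ b, ∑ l, T a b l = ∑ a, ∑ b, ∑ l, T l b a := by
  rw [sum3_prod T, sum3_prod (fun a b l => T l b a)]
  exact Fintype.sum_equiv ⟨fun p => (p.2.2, p.2.1, p.1), fun p => (p.2.2, p.2.1, p.1),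
    fun p => rfl, fun p => rfl⟩ _ _ (fun p => rfl)

lemma sum3_swap23 (T : Fin n → Fin n → Fin n → ℝ) :
    ∑ a, ∑ b, ∑ l, T a b l = ∑ a, ∑ b, ∑ l, T a l b := by
  rw [sum3_prod T, sum3_prod (fun a b l => T a l b)]
  exact Fintype.sum_equiv ⟨fun p => (p.1, p.2.2, p.2.1), fun p => (p.1, p.2.2, p.2.1),
    fun p => rfl, fun p => rfl⟩ _ _ (fun p => rfl)

lemma sum3_out' {kk : ℕ} (U : Fin n → Fin n → Fin kk → ℝ) :
    ∑ a, ∑ b, ∑ j, U a b j = ∑ j, ∑ a, ∑ b, U a b j :=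
  (Finset.sum_congr rfl fun _ _ => Finset.sum_comm).trans Finset.sum_comm

lemma key_alg {kk : ℕ} (f g : Fin n → ℝ) (p q : Fin n → Fin n → ℝ)
    (Wv Zv : Fin kk → Fin n → ℝ)
    (hfz : ∀ j, ∑ a, Zv j a * f a = 0) (hgz : ∀ j, ∑ b, Zv j b * g b = 0) :
    ∑ a, ∑ b, ((-∑ l, q a l * f l) * p a b * g b
      + f a * ((∑ j, (Wv j a * Zv j b - Wv j b * Zv j a))
          + (∑ l, p l b * q l a) + (∑ l, p a l * q l b)) * g b
      + f a * p a b * (-∑ l, q b l * g l)) = 0 := by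
  have e1 : ∀ a b, ((-∑ l, q a l * f l) * p a b * g b
      + f a * ((∑ j, (Wv j a * Zv j b - Wv j b * Zv j a))
          + (∑ l, p l b * q l a) + (∑ l, p a l * q l b)) * g b
      + f a * p a b * (-∑ l, q b l * g l))
      = (∑ j, ((f a * Wv j a) * (Zv j b * g b) - (Zv j a * f a) * (Wv j b * g b)))
        + ((∑ l, f a * (p l b * q l a) * g b) - (∑ l, (q a l * f l) * (p a b * g b)))
        + ((∑ l, f a * (p a l * q l b) * g b) - (∑ l, f a * p a b * (q b l * g l))) := by
    intro a b
    simp only [Finset.sum_mul, Finset.mul_sum, neg_mul, mul_neg, add_mul, mul_add,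
      Finset.sum_sub_distrib, Finset.sum_add_distrib, Finset.sum_neg_distrib, mul_sub, sub_mul]
    ring_nf
    have r1 : ∑ x : Fin kk, g b * f a * Wv x b * Zv x a
        = ∑ x : Fin kk, g b * f a * Zv x a * Wv x b :=
      Finset.sum_congr rfl fun x _ => by ring
    rw [r1]
    ring
  rw [Finset.sum_congr rfl fun a _ => Finset.sum_congr rfl fun b _ => e1 a b]
  simp only [Finset.sum_add_distrib, Finset.sum_sub_distrib]
  have hW : ∑ a, ∑ b, ∑ j, ((f a * Wv j a) * (Zv j b * g b) - (Zv j a * f a) * (Wv j b * g b))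
      = 0 := by
    rw [sum3_out']
    apply Finset.sum_eq_zero
    intro j _
    simp only [Finset.sum_sub_distrib]
    rw [show ∑ a, ∑ b, (f a * Wv j a) * (Zv j b * g b)
        = (∑ a, f a * Wv j a) * (∑ b, Zv j b * g b) from (Finset.sum_mul_sum _ _ _ _).symm,
      show ∑ a, ∑ b, (Zv j a * f a) * (Wv j b * g b)
        = (∑ a, Zv j a * f a) * (∑ b, Wv j b * g b) from (Finset.sum_mul_sum _ _ _ _).symm,
      hfz j, hgz j]
    ring
  simp only [Finset.sum_sub_distrib] at hW
  have hA : ∑ a, ∑ b, ∑ l, (q a l * f l) * (p a b * g b)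
      = ∑ a, ∑ b, ∑ l, f a * (p l b * q l a) * g b := by
    rw [sum3_swap13 (fun a b l => (q a l * f l) * (p a b * g b))]
    exact Finset.sum_congr rfl fun a _ => Finset.sum_congr rfl fun b _ =>
      Finset.sum_congr rfl fun l _ => by ring
  have hD : ∑ a, ∑ b, ∑ l, f a * p a b * (q b l * g l)
      = ∑ a, ∑ b, ∑ l, f a * (p a l * q l b) * g b := by
    rw [sum3_swap23 (fun a b l => f a * p a b * (q b l * g l))]
    exact Finset.sum_congr rfl fun a _ => Finset.sum_congr rfl fun b _ =>
      Finset.sum_congr rfl fun l _ => by ring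
  linarith [hW, hA, hD]

lemma fderiv_pb_apply {π : (Fin m → ℝ) → Fin m → Fin m → ℝ} {F G : (Fin m → ℝ) → ℝ}
    (hπ : ContDiff ℝ (⊤ : ℕ∞) π) (hF : ContDiff ℝ (⊤ : ℕ∞) F) (hG : ContDiff ℝ (⊤ : ℕ∞) G) (x v : Fin m → ℝ) :
    fderiv ℝ (pb π F G) x v = ∑ a, ∑ b,
      (fderiv ℝ (fun y => pd F y a) x v * π x a b * pd G x b
       + pd F x a * fderiv ℝ (fun y => π y a b) x v * pd G x b
       + pd F x a * π x a b * fderiv ℝ (fun y => pd G y b) x v) := by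
  have hπab : ∀ a b, ContDiff ℝ (⊤ : ℕ∞) (fun y => π y a b) :=
    fun a b => (contDiff_pi.mp ((contDiff_pi.mp hπ) a)) b
  have hFa : ∀ a : Fin m, HasFDerivAt (fun y => pd F y a) (fderiv ℝ (fun y => pd F y a) x) x :=
    fun a => ((contDiff_pd hF a).differentiable (by simp) x).hasFDerivAt
  have hGb : ∀ b : Fin m, HasFDerivAt (fun y => pd G y b) (fderiv ℝ (fun y => pd G y b) x) x :=
    fun b => ((contDiff_pd hG b).differentiable (by simp) x).hasFDerivAt
  have hpab : ∀ a b : Fin m,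
      HasFDerivAt (fun y => π y a b) (fderiv ℝ (fun y => π y a b) x) x :=
    fun a b => ((hπab a b).differentiable (by simp) x).hasFDerivAt
  have hsum : HasFDerivAt (pb π F G)
      (∑ a, ∑ b, ((pd F x a * π x a b) • fderiv ℝ (fun y => pd G y b) x
        + pd G x b • (pd F x a • fderiv ℝ (fun y => π y a b) x
            + π x a b • fderiv ℝ (fun y => pd F y a) x))) x := by
    apply HasFDerivAt.fun_sum
    intro a _
    apply HasFDerivAt.fun_sum
    intro b _
    exact ((hFa a).mul (hpab a b)).mul (hGb b)
  rw [hsum.fderiv]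
  simp only [ContinuousLinearMap.coe_sum', Finset.sum_apply, ContinuousLinearMap.add_apply,
    ContinuousLinearMap.smul_apply, smul_eq_mul]
  exact Finset.sum_congr rfl fun a _ => Finset.sum_congr rfl fun b _ => by ring

end Aux

theorem stmt0 (m k : ℕ)
    (π : (Fin m → ℝ) → Fin m → Fin m → ℝ)
    (Z : Fin k → (Fin m → ℝ) → Fin m → ℝ)
    (W : Fin k → Fin k → (Fin m → ℝ) → Fin m → ℝ)
    (hπ : ContDiff ℝ (⊤ : ℕ∞) π) (hskew : skewBi π) (hjac : jacobiBi π)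
    (hZ : ∀ i, ContDiff ℝ (⊤ : ℕ∞) (Z i)) (hW : ∀ i j, ContDiff ℝ (⊤ : ℕ∞) (W i j))
    (hlie : ∀ i x a b, lieDerivBi (Z i) π x a b = ∑ j, wedgeVF (W i j) (Z j) x a b) :
    ∀ F G : (Fin m → ℝ) → ℝ, ContDiff ℝ (⊤ : ℕ∞) F → ContDiff ℝ (⊤ : ℕ∞) G →
      (∀ i x, fderiv ℝ F x (Z i x) = 0) → (∀ i x, fderiv ℝ G x (Z i x) = 0) →
      ∀ i x, fderiv ℝ (pb π F G) x (Z i x) = 0 := by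
  intro F G hF hG hFZ hGZ i x
  set v := Z i x with hv
  have hDF : ∀ a, fderiv ℝ (fun y => pd F y a) x v
      = -∑ l, fderiv ℝ (fun y => Z i y l) x (Pi.single a 1) * pd F x l := by
    intro a
    rw [fderiv_pd_apply hF x v a, snd_symm hF x v (Pi.single a 1),
      deriv_invariance hF (hZ i) (hFZ i) x (Pi.single a 1),
      fderiv_eq_sum_pd F x (fderiv ℝ (Z i) x (Pi.single a 1)), neg_inj]
    exact Finset.sum_congr rfl fun l _ => by rw [fderiv_proj (hZ i)]
  have hDG : ∀ b, fderiv ℝ (fun y => pd G y b) x v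
      = -∑ l, fderiv ℝ (fun y => Z i y l) x (Pi.single b 1) * pd G x l := by
    intro b
    rw [fderiv_pd_apply hG x v b, snd_symm hG x v (Pi.single b 1),
      deriv_invariance hG (hZ i) (hGZ i) x (Pi.single b 1),
      fderiv_eq_sum_pd G x (fderiv ℝ (Z i) x (Pi.single b 1)), neg_inj]
    exact Finset.sum_congr rfl fun l _ => by rw [fderiv_proj (hZ i)]
  have hDπ : ∀ a b, fderiv ℝ (fun y => π y a b) x v
      = (∑ j, wedgeVF (W i j) (Z j) x a b)
        + (∑ l, π x l b * fderiv ℝ (fun y => Z i y a) x (Pi.single l 1))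
        + (∑ l, π x a l * fderiv ℝ (fun y => Z i y b) x (Pi.single l 1)) := by
    intro a b
    have h := hlie i x a b
    simp only [lieDerivBi] at h
    linarith
  have hfz : ∀ j, ∑ a, Z j x a * pd F x a = 0 := fun j => by
    rw [← fderiv_eq_sum_pd]; exact hFZ j x
  have hgz : ∀ j, ∑ b, Z j x b * pd G x b = 0 := fun j => by
    rw [← fderiv_eq_sum_pd]; exact hGZ j x
  calc fderiv ℝ (pb π F G) x v
      = ∑ a, ∑ b, (fderiv ℝ (fun y => pd F y a) x v * π x a b * pd G x b
        + pd F x a * fderiv ℝ (fun y => π y a b) x v * pd G x b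
        + pd F x a * π x a b * fderiv ℝ (fun y => pd G y b) x v) :=
        fderiv_pb_apply hπ hF hG x v
    _ = ∑ a, ∑ b, ((-∑ l, fderiv ℝ (fun y => Z i y l) x (Pi.single a 1) * pd F x l)
            * π x a b * pd G x b
        + pd F x a * ((∑ j, (W i j x a * Z j x b - W i j x b * Z j x a))
            + (∑ l, π x l b * fderiv ℝ (fun y => Z i y a) x (Pi.single l 1))
            + (∑ l, π x a l * fderiv ℝ (fun y => Z i y b) x (Pi.single l 1))) * pd G x b
        + pd F x a * π x a b
            * (-∑ l, fderiv ℝ (fun y => Z i y l) x (Pi.single b 1) * pd G x l)) :=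
        Finset.sum_congr rfl fun a _ => Finset.sum_congr rfl fun b _ => by
          rw [hDF a, hDπ a b, hDG b]; rfl
    _ = 0 := key_alg (pd F x) (pd G x) (fun a b => π x a b)
        (fun l a => fderiv ℝ (fun y => Z i y a) x (Pi.single l 1))
        (fun j a => W i j x a) (fun j a => Z j x a) hfz hgz
end
end

section
/- With the hypotheses of the reparametrization lemma, for any smooth functions A, B on M, the restriction to S of {A,φ̃_2}_π{B,φ̃_1}_π − {A,φ̃_1}_π{B,φ̃_2}_π equals D times the restriction to S of {A,φ_2}_π{B,φ_1}_π − {A,φ_1}_π{B,φ_2}_π. Consequently the two-constraint Dirac brackets defined by (φ_1,φ_2) and by (φ̃_1,φ̃_2) agree on S. -/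
noncomputable section
open scoped BigOperators

lemma pd_comb {m : ℕ} (φ₁ φ₂ ψ₁ ψ₂ : (Fin m → ℝ) → ℝ)
    (hφ₁ : ContDiff ℝ (⊤ : ℕ∞) φ₁) (hφ₂ : ContDiff ℝ (⊤ : ℕ∞) φ₂)
    (hψ₁ : ContDiff ℝ (⊤ : ℕ∞) ψ₁) (hψ₂ : ContDiff ℝ (⊤ : ℕ∞) ψ₂)
    (x : Fin m → ℝ) (h1 : φ₁ x = 0) (h2 : φ₂ x = 0) (a : Fin m) :
    pd (fun y => ψ₁ y * φ₁ y + ψ₂ y * φ₂ y) x a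
      = ψ₁ x * pd φ₁ x a + ψ₂ x * pd φ₂ x a := by
  have d1 := hφ₁.differentiable (by simp) x
  have d2 := hφ₂.differentiable (by simp) x
  have e1 := hψ₁.differentiable (by simp) x
  have e2 := hψ₂.differentiable (by simp) x
  unfold pd
  rw [fderiv_fun_add (by exact e1.mul d1) (by exact e2.mul d2),
    fderiv_fun_mul e1 d1, fderiv_fun_mul e2 d2]
  simp [h1, h2]

lemma pb_comb {m : ℕ} (π : (Fin m → ℝ) → Fin m → Fin m → ℝ)
    (A φ₁ φ₂ ψ₁ ψ₂ : (Fin m → ℝ) → ℝ)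
    (hφ₁ : ContDiff ℝ (⊤ : ℕ∞) φ₁) (hφ₂ : ContDiff ℝ (⊤ : ℕ∞) φ₂)
    (hψ₁ : ContDiff ℝ (⊤ : ℕ∞) ψ₁) (hψ₂ : ContDiff ℝ (⊤ : ℕ∞) ψ₂)
    (x : Fin m → ℝ) (h1 : φ₁ x = 0) (h2 : φ₂ x = 0) :
    pb π A (fun y => ψ₁ y * φ₁ y + ψ₂ y * φ₂ y) x
      = ψ₁ x * pb π A φ₁ x + ψ₂ x * pb π A φ₂ x := by
  simp only [pb, Finset.mul_sum, ← Finset.sum_add_distrib]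
  refine Finset.sum_congr rfl fun a _ => Finset.sum_congr rfl fun b _ => ?_
  rw [pd_comb φ₁ φ₂ ψ₁ ψ₂ hφ₁ hφ₂ hψ₁ hψ₂ x h1 h2 b]
  ring

lemma pb_skew {m : ℕ} (π : (Fin m → ℝ) → Fin m → Fin m → ℝ)
    (hskew : skewBi π) (F G : (Fin m → ℝ) → ℝ) (x : Fin m → ℝ) :
    pb π F G x = - pb π G F x := by
  have h : ∀ a b : Fin m, pd F x a * π x a b * pd G x b
      = -(pd G x b * π x b a * pd F x a) := fun a b => by
    rw [hskew x a b]; ring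
  simp only [pb, h, Finset.sum_neg_distrib]
  rw [Finset.sum_comm]

lemma pb_self {m : ℕ} (π : (Fin m → ℝ) → Fin m → Fin m → ℝ)
    (hskew : skewBi π) (F : (Fin m → ℝ) → ℝ) (x : Fin m → ℝ) :
    pb π F F x = 0 := by
  have := pb_skew π hskew F F x
  linarith

/-- Under the reparametrization `φ̃₁ = ψ₁φ₁ + ψ₂φ₂`, `φ̃₂ = ψ₃φ₁ + ψ₄φ₂`
with `D = ψ₁ψ₄ − ψ₂ψ₃ ≠ 0` on `S`, for any smooth `A, B` the combination
`{A,φ̃₂}{B,φ̃₁} − {A,φ̃₁}{B,φ̃₂}` restricted to `S` equals `D` times the corresponding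
combination for `(φ₁,φ₂)`; consequently the two-constraint Dirac brackets defined by
`(φ₁,φ₂)` and `(φ̃₁,φ̃₂)` agree on `S`. -/
theorem stmt11 (m : ℕ)
    (π : (Fin m → ℝ) → Fin m → Fin m → ℝ)
    (φ₁ φ₂ ψ₁ ψ₂ ψ₃ ψ₄ : (Fin m → ℝ) → ℝ)
    (hπ : ContDiff ℝ (⊤ : ℕ∞) π) (hskew : skewBi π) (hjac : jacobiBi π)
    (hφ₁ : ContDiff ℝ (⊤ : ℕ∞) φ₁) (hφ₂ : ContDiff ℝ (⊤ : ℕ∞) φ₂)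
    (hψ₁ : ContDiff ℝ (⊤ : ℕ∞) ψ₁) (hψ₂ : ContDiff ℝ (⊤ : ℕ∞) ψ₂)
    (hψ₃ : ContDiff ℝ (⊤ : ℕ∞) ψ₃) (hψ₄ : ContDiff ℝ (⊤ : ℕ∞) ψ₄)
    (hsecond : ∀ x, φ₁ x = 0 → φ₂ x = 0 → pb π φ₁ φ₂ x ≠ 0)
    (hD : ∀ x, φ₁ x = 0 → φ₂ x = 0 → ψ₁ x * ψ₄ x - ψ₂ x * ψ₃ x ≠ 0) :
    ∀ A B : (Fin m → ℝ) → ℝ, ContDiff ℝ (⊤ : ℕ∞) A → ContDiff ℝ (⊤ : ℕ∞) B →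
      ∀ x, φ₁ x = 0 → φ₂ x = 0 →
      (pb π A (fun y => ψ₃ y * φ₁ y + ψ₄ y * φ₂ y) x
          * pb π B (fun y => ψ₁ y * φ₁ y + ψ₂ y * φ₂ y) x
        - pb π A (fun y => ψ₁ y * φ₁ y + ψ₂ y * φ₂ y) x
          * pb π B (fun y => ψ₃ y * φ₁ y + ψ₄ y * φ₂ y) x
        = (ψ₁ x * ψ₄ x - ψ₂ x * ψ₃ x)
          * (pb π A φ₂ x * pb π B φ₁ x - pb π A φ₁ x * pb π B φ₂ x))
      ∧ (pb π A B x
          + (pb π A φ₂ x * pb π B φ₁ x - pb π A φ₁ x * pb π B φ₂ x)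
            / pb π φ₁ φ₂ x
        = pb π A B x
          + (pb π A (fun y => ψ₃ y * φ₁ y + ψ₄ y * φ₂ y) x
              * pb π B (fun y => ψ₁ y * φ₁ y + ψ₂ y * φ₂ y) x
            - pb π A (fun y => ψ₁ y * φ₁ y + ψ₂ y * φ₂ y) x
              * pb π B (fun y => ψ₃ y * φ₁ y + ψ₄ y * φ₂ y) x)
            / pb π (fun y => ψ₁ y * φ₁ y + ψ₂ y * φ₂ y)
                   (fun y => ψ₃ y * φ₁ y + ψ₄ y * φ₂ y) x) := by
  intro A B hA hB x h1 h2
  have hc12 := pb_comb π A φ₁ φ₂ ψ₁ ψ₂ hφ₁ hφ₂ hψ₁ hψ₂ x h1 h2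
  have hc34 := pb_comb π A φ₁ φ₂ ψ₃ ψ₄ hφ₁ hφ₂ hψ₃ hψ₄ x h1 h2
  have hb12 := pb_comb π B φ₁ φ₂ ψ₁ ψ₂ hφ₁ hφ₂ hψ₁ hψ₂ x h1 h2
  have hb34 := pb_comb π B φ₁ φ₂ ψ₃ ψ₄ hφ₁ hφ₂ hψ₃ hψ₄ x h1 h2
  have hnum : pb π A (fun y => ψ₃ y * φ₁ y + ψ₄ y * φ₂ y) x
      * pb π B (fun y => ψ₁ y * φ₁ y + ψ₂ y * φ₂ y) x
      - pb π A (fun y => ψ₁ y * φ₁ y + ψ₂ y * φ₂ y) x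
        * pb π B (fun y => ψ₃ y * φ₁ y + ψ₄ y * φ₂ y) x
      = (ψ₁ x * ψ₄ x - ψ₂ x * ψ₃ x)
        * (pb π A φ₂ x * pb π B φ₁ x - pb π A φ₁ x * pb π B φ₂ x) := by
    rw [hc12, hc34, hb12, hb34]; ring
  refine ⟨hnum, ?_⟩
  have hden : pb π (fun y => ψ₁ y * φ₁ y + ψ₂ y * φ₂ y)
      (fun y => ψ₃ y * φ₁ y + ψ₄ y * φ₂ y) x
      = (ψ₁ x * ψ₄ x - ψ₂ x * ψ₃ x) * pb π φ₁ φ₂ x := by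
    rw [pb_comb π _ φ₁ φ₂ ψ₃ ψ₄ hφ₁ hφ₂ hψ₃ hψ₄ x h1 h2,
      pb_skew π hskew _ φ₁ x, pb_skew π hskew _ φ₂ x,
      pb_comb π φ₁ φ₁ φ₂ ψ₁ ψ₂ hφ₁ hφ₂ hψ₁ hψ₂ x h1 h2,
      pb_comb π φ₂ φ₁ φ₂ ψ₁ ψ₂ hφ₁ hφ₂ hψ₁ hψ₂ x h1 h2,
      pb_self π hskew φ₁ x, pb_self π hskew φ₂ x,
      pb_skew π hskew φ₂ φ₁ x]
    ring
  rw [hnum, hden, mul_div_mul_left _ _ (hD x h1 h2)]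
end
end

section
/- In the setting where all X_i = π dφ_i are tangent to S, with W_j^{(i)} vector fields satisfying L_{Z_i}π = Σ_j W_j^{(i)} ∧ Z_j and Z_j(φ_r) = δ_{jr}, the projected fields W̃_j^{(i)} := W_j^{(i)} − Σ_r W_j^{(i)}(φ_r) Z_r are tangent to S (W̃_j^{(i)}(φ_l) = 0 for all l), and Σ_j W̃_j^{(i)} ∧ Z_j = Σ_j W_j^{(i)} ∧ Z_j provided W_j^{(i)}(φ_r) = W_r^{(i)}(φ_j) for all j,r. -/
noncomputable section
open scoped BigOperators

/-- When all `X_i = π dφ_i` are tangent to the level sets, with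
`L_{Z_i}π = ∑_j W_j^{(i)} ∧ Z_j` and `Z_j(φ_r) = δ_{jr}`, the projected fields
`W̃_j^{(i)} = W_j^{(i)} − ∑_r W_j^{(i)}(φ_r) Z_r` are tangent to the level sets, and
`∑_j W̃_j^{(i)} ∧ Z_j = ∑_j W_j^{(i)} ∧ Z_j` provided `W_j^{(i)}(φ_r) = W_r^{(i)}(φ_j)`. -/
theorem stmt18 (m k : ℕ)
    (π : (Fin m → ℝ) → Fin m → Fin m → ℝ)
    (φ : Fin k → (Fin m → ℝ) → ℝ)
    (Z : Fin k → (Fin m → ℝ) → Fin m → ℝ)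
    (W : Fin k → Fin k → (Fin m → ℝ) → Fin m → ℝ)
    (hπ : ContDiff ℝ (⊤ : ℕ∞) π) (hskew : skewBi π) (hjac : jacobiBi π)
    (hφ : ∀ i, ContDiff ℝ (⊤ : ℕ∞) (φ i)) (hZ : ∀ j, ContDiff ℝ (⊤ : ℕ∞) (Z j))
    (hW : ∀ i j, ContDiff ℝ (⊤ : ℕ∞) (W i j))
    (hnorm : ∀ r j x, fderiv ℝ (φ r) x (Z j x) = if r = j then 1 else 0)
    (htan : ∀ i j x, fderiv ℝ (φ j) x (fun a => piSharp π (φ i) x a) = 0)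
    (hlie : ∀ i x a b, lieDerivBi (Z i) π x a b = ∑ j, wedgeVF (W i j) (Z j) x a b) :
    (∀ i j l x,
      fderiv ℝ (φ l) x
        (fun a => W i j x a - ∑ r, fderiv ℝ (φ r) x (W i j x) * Z r x a) = 0)
    ∧ ((∀ i j r x, fderiv ℝ (φ r) x (W i j x) = fderiv ℝ (φ j) x (W i r x)) →
        ∀ i x a b,
          ∑ j, wedgeVF
              (fun y c => W i j y c - ∑ r, fderiv ℝ (φ r) y (W i j y) * Z r y c)
              (Z j) x a b
            = ∑ j, wedgeVF (W i j) (Z j) x a b) := by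
  constructor
  · intro i j l x
    have hv : (fun a => W i j x a - ∑ r, fderiv ℝ (φ r) x (W i j x) * Z r x a)
        = W i j x - ∑ r, (fderiv ℝ (φ r) x (W i j x)) • Z r x := by
      funext a
      simp [Finset.sum_apply]
    rw [hv, map_sub, map_sum]
    have h1 : ∀ r : Fin k,
        fderiv ℝ (φ l) x ((fderiv ℝ (φ r) x (W i j x)) • Z r x)
        = fderiv ℝ (φ r) x (W i j x) * (if l = r then 1 else 0) := by
      intro r; rw [map_smul, hnorm, smul_eq_mul]
    simp only [h1, mul_ite, mul_one, mul_zero]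
    simp
  · intro hsym i x a b
    have hS : (∑ j, ∑ r, fderiv ℝ (φ r) x (W i j x)
        * (Z r x a * Z j x b - Z r x b * Z j x a)) = 0 := by
      have h2 : (∑ j, ∑ r, fderiv ℝ (φ r) x (W i j x)
          * (Z r x a * Z j x b - Z r x b * Z j x a))
          = -∑ j, ∑ r, fderiv ℝ (φ r) x (W i j x)
          * (Z r x a * Z j x b - Z r x b * Z j x a) := by
        conv_lhs => rw [Finset.sum_comm]
        rw [← Finset.sum_neg_distrib]
        refine Finset.sum_congr rfl fun j _ => ?_
        rw [← Finset.sum_neg_distrib]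
        refine Finset.sum_congr rfl fun r _ => ?_
        rw [hsym i r j x]
        ring
      linarith
    have hterm : ∀ j : Fin k,
        wedgeVF (fun y c => W i j y c - ∑ r, fderiv ℝ (φ r) y (W i j y) * Z r y c)
          (Z j) x a b
        = wedgeVF (W i j) (Z j) x a b
          - ∑ r, fderiv ℝ (φ r) x (W i j x)
              * (Z r x a * Z j x b - Z r x b * Z j x a) := by
      intro j
      simp only [wedgeVF, sub_mul, Finset.sum_mul, mul_sub, Finset.sum_sub_distrib, mul_assoc]
      abel
    simp only [hterm, Finset.sum_sub_distrib, hS, sub_zero]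
end
end
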